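/- Let n ≥ 1 and e = (1,0,…,0) ∈ ℝⁿ. For all t ∈ [−1,1] and x ∈ S^{n−1}, one has F(t, x/2) + (1 − ‖e + x/2‖²)·e ≠ 0, where F(t,(t₁,…,t_n)) = (t·t₁, t₂, …, t_n). -/

import Mathlib

/-! Comparing coordinates other than the first forces `x = a • e` with `|a| = 1`. The vector
then becomes `b (t - 2 - b) • e` with `b = a / 2 = ±1/2`, and `t - 2 - b ≤ -1/2` for `t ≤ 1`. -/

/-- F(t,(t₁,…,t_n)) = (t·t₁, t₂, …, t_n): rescaling of the first coordinate. -/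
noncomputable def scaleFirst {n : ℕ} (t : ℝ) (y : EuclideanSpace ℝ (Fin n)) :
    EuclideanSpace ℝ (Fin n) :=
  WithLp.toLp 2 (fun i : Fin n => if (i : ℕ) = 0 then t * y i else y i)

open EuclideanSpace

section ScaleFirst

variable {n : ℕ} {i : Fin n}

lemma scaleFirst_apply_of_val_ne_zero (t : ℝ) (y : EuclideanSpace ℝ (Fin n))
    (hi : (i : ℕ) ≠ 0) : scaleFirst t y i = y i := by
  simp [scaleFirst, hi]

lemma scaleFirst_single (t : ℝ) (hi : (i : ℕ) = 0) (a : ℝ) :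
    scaleFirst t (single i a) = single i (t * a) := by
  ext j
  by_cases hj : j = i
  · simp [scaleFirst, hj, hi]
  · have hj' : (j : ℕ) ≠ 0 := fun h => hj (Fin.ext (h.trans hi.symm))
    simp [scaleFirst, hj, hj']

lemma eq_single_of_scaleFirst_add_single_eq_zero {t c : ℝ} {y : EuclideanSpace ℝ (Fin n)}
    (hi : (i : ℕ) = 0) (h : scaleFirst t y + single i c = 0) : y = single i (y i) := by
  ext j
  by_cases hj : j = i
  · simp [hj]
  · have hj' : (j : ℕ) ≠ 0 := fun h => hj (Fin.ext (h.trans hi.symm))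
    have hcoord := congrArg (· j) h
    simpa [scaleFirst_apply_of_val_ne_zero t y hj', hj] using hcoord

end ScaleFirst

/-- For all t ∈ [−1,1] and x ∈ S^{n−1}, F(t, x/2) + (1 − ‖e + x/2‖²)·e ≠ 0, where
e = (1,0,…,0). -/
theorem homotopy_nonvanishing_three (n : ℕ) (hn : 1 ≤ n) (t : ℝ) (ht : t ∈ Set.Icc (-1 : ℝ) 1)
    (x : EuclideanSpace ℝ (Fin n)) (hx : ‖x‖ = 1) :
    let e : EuclideanSpace ℝ (Fin n) := EuclideanSpace.single (⟨0, hn⟩ : Fin n) (1 : ℝ)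
    scaleFirst t ((2 : ℝ)⁻¹ • x) + (1 - ‖e + (2 : ℝ)⁻¹ • x‖ ^ 2) • e ≠ 0 := by
  intro e h
  set b := ((2 : ℝ)⁻¹ • x) ⟨0, hn⟩
  have he : e = single ⟨0, hn⟩ 1 := rfl
  have hsmul : ∀ c : ℝ, c • e = single ⟨0, hn⟩ c := fun c => by
    ext j
    by_cases hj : j = ⟨0, hn⟩ <;> simp [e, hj]
  rw [hsmul] at h
  have hy := eq_single_of_scaleFirst_add_single_eq_zero rfl h
  have hb : |b| = 1 / 2 :=
    calc |b| = ‖single (⟨0, hn⟩ : Fin n) b‖ := by rw [PiLp.norm_single, Real.norm_eq_abs]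
      _ = ‖(2 : ℝ)⁻¹ • x‖ := by rw [← hy]
      _ = 1 / 2 := by rw [norm_smul, hx]; norm_num
  rw [hy, scaleFirst_single t rfl, he, ← PiLp.single_add, ← PiLp.single_add, PiLp.norm_single,
    PiLp.single_eq_zero_iff, Real.norm_eq_abs, sq_abs] at h
  have hfactor : b * (t - 2 - b) = 0 := by linear_combination h
  have hb0 : b ≠ 0 := by intro h0; rw [h0] at hb; norm_num at hb
  have ht' : t - 2 - b < 0 := by linarith [(abs_le.mp hb.le).1, ht.2]
  exact mul_ne_zero hb0 ht'.ne hfactor
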